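/- In the common-panel factor-model setup, suppose α₁ > α₂. Then a_{1,p}/a_{2,p} → 0 as p → ∞ and, for every x > 0, P(Q_p ≤ a_{2,p} x) → Ψ_{α₂}(x) as p → ∞. (Corollary 1, third case.) -/

import Mathlib

/-!
Conditionally on the factor `Z`, the event `Q_p ≤ b_p` is the intersection of the independent
events `ε_{j,i} ≤ u_{p,i} := (b_p - f_i(Z)) / σ_i`, so its conditional probability is
`∏_{i<p} (1 - T₁(u_{p,i})) (1 - T₂(u_{p,i}))`, where `T_j` is the tail of `ε_{j,1}`.
Since `f_i(Z)` is bounded, `u_{p,i} → ∞` uniformly in `i`, hence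
`T_j(u_{p,i}) ~ (σ_i / b_p)^{α_j}` uniformly, and these sum to `(a_{j,p} / b_p)^{α_j}`.
A product `∏ (1 - q_{p,i})` over a uniformly negligible array with `∑_i q_{p,i} → L` tends to
`exp (-L)`, by `-log (1 - q) ~ q`. For `b_p = a_{2,p} x` the two limits are
`x^{-α₂}` and `0`, the latter because `a_{1,p} / a_{2,p} = O(p^{1/α₁ - 1/α₂})`; dominated
convergence removes the conditioning.
-/

open MeasureTheory ProbabilityTheory Filter

noncomputable section

/-- The Fréchet distribution function with tail index `α`. -/
def frechetCDF (α x : ℝ) : ℝ := if 0 < x then Real.exp (-x ^ (-α)) else 0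

/-- The norming constant `a_p = (Σ_{i<p} σ_i^α)^{1/α}`. -/
def normConst (σ : ℕ → ℝ) (α : ℝ) (p : ℕ) : ℝ :=
  (∑ i ∈ Finset.range p, σ i ^ α) ^ (1 / α)

/-- Maximum of the first `p₁` variables of the first group and the first `p₂`
variables of the second group. -/
def Qmax {Ω : Type*} (X₁ X₂ : ℕ → Ω → ℝ) (p₁ p₂ : ℕ) (ω : Ω) : ℝ :=
  max (⨆ i : Fin p₁, X₁ i ω) (⨆ j : Fin p₂, X₂ j ω)

/-- Codomains of the family consisting of the factor `Z` and the two noise arrays. -/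
def mixCodom (d : ℕ) : Unit ⊕ ℕ ⊕ ℕ → Type
  | Sum.inl _ => Fin d → ℝ
  | Sum.inr _ => ℝ

instance mixCodomMeasurableSpace (d : ℕ) : ∀ i, MeasurableSpace (mixCodom d i)
  | Sum.inl _ => inferInstanceAs (MeasurableSpace (Fin d → ℝ))
  | Sum.inr (Sum.inl _) => inferInstanceAs (MeasurableSpace ℝ)
  | Sum.inr (Sum.inr _) => inferInstanceAs (MeasurableSpace ℝ)

/-- The family consisting of the factor `Z` and the two noise arrays. -/
def mixFun {Ω : Type*} {d : ℕ} (Z : Ω → Fin d → ℝ) (ε₁ ε₂ : ℕ → Ω → ℝ) :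
    ∀ i : Unit ⊕ ℕ ⊕ ℕ, Ω → mixCodom d i
  | Sum.inl _ => Z
  | Sum.inr (Sum.inl i) => ε₁ i
  | Sum.inr (Sum.inr j) => ε₂ j

open Asymptotics Finset Topology
open scoped ENNReal

theorem normConst_nonneg {σ : ℕ → ℝ} (hσ : ∀ i, 0 ≤ σ i) (α : ℝ) (p : ℕ) :
    0 ≤ normConst σ α p :=
  Real.rpow_nonneg (sum_nonneg fun i _ => Real.rpow_nonneg (hσ i) α) _

theorem normConst_rpow {σ : ℕ → ℝ} (hσ : ∀ i, 0 ≤ σ i) {α : ℝ} (hα : α ≠ 0) (p : ℕ) :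
    normConst σ α p ^ α = ∑ i ∈ range p, σ i ^ α := by
  rw [normConst, ← Real.rpow_mul (sum_nonneg fun i _ => Real.rpow_nonneg (hσ i) α),
    one_div_mul_cancel hα, Real.rpow_one]

theorem mul_rpow_rpow_one_div {x C α : ℝ} (hx : 0 ≤ x) (hC : 0 ≤ C) (hα : α ≠ 0) :
    (x * C ^ α) ^ (1 / α) = C * x ^ (1 / α) := by
  rw [Real.mul_rpow hx (Real.rpow_nonneg hC α), one_div, Real.rpow_rpow_inv hC hα, mul_comm]

theorem le_normConst {σ : ℕ → ℝ} {C α : ℝ} (hC : 0 ≤ C) (hσ : ∀ i, C ≤ σ i) (hα : 0 < α)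
    (p : ℕ) : C * (p : ℝ) ^ (1 / α) ≤ normConst σ α p := by
  rw [← mul_rpow_rpow_one_div p.cast_nonneg hC hα.ne', normConst]
  refine Real.rpow_le_rpow (by positivity) ?_ (by positivity)
  calc (p : ℝ) * C ^ α = ∑ _i ∈ range p, C ^ α := by simp
    _ ≤ ∑ i ∈ range p, σ i ^ α := sum_le_sum fun i _ => Real.rpow_le_rpow hC (hσ i) hα.le

theorem normConst_le {σ : ℕ → ℝ} {C α : ℝ} (hσ : ∀ i, σ i ∈ Set.Icc 0 C) (hα : 0 < α)
    (p : ℕ) : normConst σ α p ≤ C * (p : ℝ) ^ (1 / α) := by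
  have hC : 0 ≤ C := (hσ 0).1.trans (hσ 0).2
  rw [← mul_rpow_rpow_one_div p.cast_nonneg hC hα.ne', normConst]
  refine Real.rpow_le_rpow (sum_nonneg fun i _ => Real.rpow_nonneg (hσ i).1 α) ?_ (by positivity)
  calc ∑ i ∈ range p, σ i ^ α ≤ ∑ _i ∈ range p, C ^ α :=
        sum_le_sum fun i _ => Real.rpow_le_rpow (hσ i).1 (hσ i).2 hα.le
    _ = (p : ℝ) * C ^ α := by simp

theorem tendsto_normConst_atTop {σ : ℕ → ℝ} {C α : ℝ} (hC : 0 < C) (hσ : ∀ i, C ≤ σ i)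
    (hα : 0 < α) : Tendsto (normConst σ α) atTop atTop :=
  tendsto_atTop_mono (le_normConst hC.le hσ hα) <| Tendsto.const_mul_atTop hC <|
    (tendsto_rpow_atTop (one_div_pos.mpr hα)).comp tendsto_natCast_atTop_atTop

theorem tendsto_normConst_div_normConst {σ : ℕ → ℝ} {C₁ C₂ α₁ α₂ : ℝ} (hC₁ : 0 < C₁)
    (hσ : ∀ i, σ i ∈ Set.Icc C₁ C₂) (hα₂ : 0 < α₂) (hα : α₂ < α₁) :
    Tendsto (fun p => normConst σ α₁ p / normConst σ α₂ p) atTop (𝓝 0) := by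
  have hσ0 : ∀ i, 0 ≤ σ i := fun i => hC₁.le.trans (hσ i).1
  have hC₂ : 0 ≤ C₂ := (hσ0 0).trans (hσ 0).2
  have hexp : 0 < 1 / α₂ - 1 / α₁ := sub_pos.mpr (one_div_lt_one_div_of_lt hα₂ hα)
  have hlim : Tendsto (fun p : ℕ => C₂ / C₁ * (p : ℝ) ^ (-(1 / α₂ - 1 / α₁))) atTop (𝓝 0) := by
    simpa using ((tendsto_rpow_neg_atTop hexp).comp tendsto_natCast_atTop_atTop).const_mul
      (C₂ / C₁)
  refine squeeze_zero' (Eventually.of_forall fun p =>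
    div_nonneg (normConst_nonneg hσ0 _ p) (normConst_nonneg hσ0 _ p)) ?_ hlim
  filter_upwards [eventually_ge_atTop 1] with p hp
  have hp' : (0 : ℝ) < p := by exact_mod_cast hp
  calc normConst σ α₁ p / normConst σ α₂ p
      ≤ C₂ * (p : ℝ) ^ (1 / α₁) / (C₁ * (p : ℝ) ^ (1 / α₂)) :=
        div_le_div₀ (by positivity)
          (normConst_le (fun i => ⟨hσ0 i, (hσ i).2⟩) (hα₂.trans hα) p) (by positivity)
          (le_normConst hC₁.le (fun i => (hσ i).1) hα₂ p)
    _ = C₂ / C₁ * (p : ℝ) ^ (-(1 / α₂ - 1 / α₁)) := by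
        rw [neg_sub, Real.rpow_sub hp']
        field_simp

theorem sum_range_div_rpow {σ : ℕ → ℝ} (hσ : ∀ i, 0 ≤ σ i) {α b : ℝ} (hα : α ≠ 0) (hb : 0 ≤ b)
    (p : ℕ) : ∑ i ∈ range p, (σ i / b) ^ α = (normConst σ α p / b) ^ α := by
  simp_rw [Real.div_rpow (hσ _) hb, Real.div_rpow (normConst_nonneg hσ α p) hb, ← sum_div,
    normConst_rpow hσ hα]

-- Along `atTop ×ˢ ⊤` on `ℕ × ℕ`, a pair `(p, i)` goes to infinity in `p` uniformly in `i`.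
theorem tendsto_sum_range_of_isEquivalent {s t : ℕ → ℕ → ℝ} {L : ℝ}
    (hs0 : ∀ᶠ p in atTop, ∀ i, 0 ≤ s p i)
    (hs : Tendsto (fun p => ∑ i ∈ range p, s p i) atTop (𝓝 L))
    (hts : (fun q : ℕ × ℕ => t q.1 q.2) ~[atTop ×ˢ ⊤] fun q => s q.1 q.2) :
    Tendsto (fun p => ∑ i ∈ range p, t p i) atTop (𝓝 L) := by
  suffices Tendsto (fun p => ∑ i ∈ range p, (t p i - s p i)) atTop (𝓝 0) by
    simpa [sum_sub_distrib] using this.add hs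
  rw [Metric.tendsto_nhds]
  intro ε hε
  have hK : 0 < |L| + 1 := by positivity
  have hsmall := hts.isLittleO.def (c := ε / (2 * (|L| + 1))) (by positivity)
  rw [Filter.Eventually, mem_prod_top] at hsmall
  filter_upwards [hsmall, hs0, hs.eventually (gt_mem_nhds ((le_abs_self L).trans_lt
    (lt_add_one _)))] with p hts hs0 hsL
  rw [dist_zero_right, Real.norm_eq_abs]
  calc |∑ i ∈ range p, (t p i - s p i)|
      ≤ ∑ i ∈ range p, ε / (2 * (|L| + 1)) * s p i := by
        refine (abs_sum_le_sum_abs _ _).trans (sum_le_sum fun i _ => ?_)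
        simpa [abs_of_nonneg (hs0 i)] using hts i
    _ ≤ ε / (2 * (|L| + 1)) * (|L| + 1) := by
        rw [← mul_sum]; gcongr
    _ < ε := by field_simp; linarith

theorem isEquivalent_neg_log_one_sub : (fun y : ℝ => -Real.log (1 - y)) ~[𝓝 0] id := by
  have h : HasDerivAt (fun y : ℝ => -Real.log (1 - y)) 1 0 := by
    simpa using (((hasDerivAt_id (0 : ℝ)).const_sub 1).log (by norm_num)).fun_neg
  have h' := hasDerivAt_iff_isLittleO.mp h
  simp only [sub_zero, neg_zero, Real.log_one, smul_eq_mul, mul_one] at h'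
  exact h'

theorem tendsto_prod_range_one_sub {q : ℕ → ℕ → ℝ} {L : ℝ} (hq0 : ∀ p i, 0 ≤ q p i)
    (hq : Tendsto (fun x : ℕ × ℕ => q x.1 x.2) (atTop ×ˢ ⊤) (𝓝 0))
    (hsum : Tendsto (fun p => ∑ i ∈ range p, q p i) atTop (𝓝 L)) :
    Tendsto (fun p => ∏ i ∈ range p, (1 - q p i)) atTop (𝓝 (Real.exp (-L))) := by
  have hlog : Tendsto (fun p => ∑ i ∈ range p, -Real.log (1 - q p i)) atTop (𝓝 L) :=
    tendsto_sum_range_of_isEquivalent (Eventually.of_forall fun p => hq0 p) hsum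
      (isEquivalent_neg_log_one_sub.comp_tendsto hq)
  have hlt : ∀ᶠ p in atTop, ∀ i, q p i < 1 := by
    have := hq.eventually (gt_mem_nhds one_pos)
    rwa [Filter.Eventually, mem_prod_top] at this
  refine ((Real.continuous_exp.tendsto _).comp hlog.neg).congr' ?_
  filter_upwards [hlt] with p hp
  simp only [Function.comp_apply, ← sum_neg_distrib, neg_neg, Real.exp_sum]
  exact prod_congr rfl fun i _ => Real.exp_log (by linarith [hp i])

theorem isEquivalent_rpow_neg_of_tendsto {T : ℝ → ℝ} {α : ℝ}
    (htail : Tendsto (fun y => y ^ α * T y) atTop (𝓝 1)) : T ~[atTop] fun y => y ^ (-α) := by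
  refine isEquivalent_of_tendsto_one (htail.congr' ?_)
  filter_upwards [eventually_gt_atTop 0] with y hy
  rw [Pi.div_apply, Real.rpow_neg hy.le, div_inv_eq_mul, mul_comm]

theorem tendsto_sub_div_atTop_prod_top {b c σ : ℕ → ℝ} {C M : ℝ} (hb : Tendsto b atTop atTop)
    (hc : ∀ i, |c i| ≤ M) (hσ : ∀ i, σ i ∈ Set.Ioc 0 C) :
    Tendsto (fun q : ℕ × ℕ => (b q.1 - c q.2) / σ q.2) (atTop ×ˢ ⊤) atTop := by
  have hC : 0 < C := (hσ 0).1.trans_le (hσ 0).2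
  have hlow : Tendsto (fun q : ℕ × ℕ => (b q.1 - M) / C) (atTop ×ˢ ⊤) atTop :=
    ((tendsto_atTop_add_const_right _ (-M) hb).atTop_div_const hC).comp tendsto_fst
  refine tendsto_atTop_mono' _ ?_ hlow
  filter_upwards [(hb.comp tendsto_fst).eventually_ge_atTop M] with q hq
  have hbM : 0 ≤ b q.1 - M := sub_nonneg.mpr hq
  obtain ⟨hσ0, hσC⟩ := hσ q.2
  calc (b q.1 - M) / C ≤ (b q.1 - M) / σ q.2 := div_le_div_of_nonneg_left hbM hσ0 hσC
    _ ≤ (b q.1 - c q.2) / σ q.2 := by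
        gcongr
        linarith [(abs_le.mp (hc q.2)).2]

theorem tendsto_div_sub_rpow_atTop_prod_top {b c : ℕ → ℝ} {M α : ℝ} (hb : Tendsto b atTop atTop)
    (hc : ∀ i, |c i| ≤ M) :
    Tendsto (fun q : ℕ × ℕ => (b q.1 / (b q.1 - c q.2)) ^ α) (atTop ×ˢ ⊤) (𝓝 1) := by
  have hb' : Tendsto (fun q : ℕ × ℕ => b q.1) (atTop ×ˢ ⊤) atTop := hb.comp tendsto_fst
  have hcb : Tendsto (fun q : ℕ × ℕ => c q.2 / b q.1) (atTop ×ˢ ⊤) (𝓝 0) := by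
    refine squeeze_zero_norm' ?_ (tendsto_const_nhds (x := M) |>.div_atTop hb')
    filter_upwards [hb'.eventually_gt_atTop 0] with q hq
    rw [norm_div, Real.norm_eq_abs, Real.norm_eq_abs, abs_of_pos hq]
    exact div_le_div_of_nonneg_right (hc q.2) hq.le
  have h1 : Tendsto (fun q : ℕ × ℕ => ((1 - c q.2 / b q.1)⁻¹) ^ α) (atTop ×ˢ ⊤) (𝓝 1) := by
    simpa using ((tendsto_const_nhds.sub hcb).inv₀ (by norm_num)).rpow_const
      (Or.inl (by norm_num : (1 - 0 : ℝ)⁻¹ ≠ 0)) (p := α)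
  refine h1.congr' ?_
  filter_upwards [hb'.eventually_gt_atTop 0] with q hq
  rw [one_sub_div hq.ne', inv_div]

theorem rpow_neg_sub_div_eq {b c s α : ℝ} (hb : 0 < b) (hbc : 0 < b - c) (hs : 0 < s) :
    ((b - c) / s) ^ (-α) = (s / b) ^ α * (b / (b - c)) ^ α := by
  rw [← Real.mul_rpow (div_pos hs hb).le (div_pos hb hbc).le, Real.rpow_neg (div_pos hbc hs).le,
    ← Real.inv_rpow (div_pos hbc hs).le, inv_div, div_mul_div_cancel₀ hb.ne']

section Tail

variable {T : ℝ → ℝ} {α : ℝ} {σ b c : ℕ → ℝ} {C M L : ℝ}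

theorem tendsto_sum_range_tail (htail : Tendsto (fun y => y ^ α * T y) atTop (𝓝 1))
    (hα : α ≠ 0) (hσ : ∀ i, σ i ∈ Set.Ioc 0 C) (hc : ∀ i, |c i| ≤ M)
    (hb : Tendsto b atTop atTop)
    (hL : Tendsto (fun p => (normConst σ α p / b p) ^ α) atTop (𝓝 L)) :
    Tendsto (fun p => ∑ i ∈ range p, T ((b p - c i) / σ i)) atTop (𝓝 L) := by
  have hσ0 : ∀ i, 0 ≤ σ i := fun i => (hσ i).1.le
  have hb' : Tendsto (fun q : ℕ × ℕ => b q.1) (atTop ×ˢ ⊤) atTop := hb.comp tendsto_fst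
  have hpow : (fun q : ℕ × ℕ => ((b q.1 - c q.2) / σ q.2) ^ (-α)) ~[atTop ×ˢ ⊤]
      fun q => (σ q.2 / b q.1) ^ α := by
    have h := (IsEquivalent.refl (u := fun q : ℕ × ℕ => (σ q.2 / b q.1) ^ α)).mul
      ((isEquivalent_const_iff_tendsto one_ne_zero).mpr
        (tendsto_div_sub_rpow_atTop_prod_top hb hc (α := α)))
    rw [Function.const_one, mul_one] at h
    refine h.congr_left ?_
    filter_upwards [hb'.eventually_gt_atTop M, hb'.eventually_gt_atTop 0] with q hbM hb0
    exact (rpow_neg_sub_div_eq hb0 (by linarith [(abs_le.mp (hc q.2)).2]) (hσ q.2).1).symm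
  refine tendsto_sum_range_of_isEquivalent (s := fun p i => (σ i / b p) ^ α) ?_ ?_
    (((isEquivalent_rpow_neg_of_tendsto htail).comp_tendsto
      (tendsto_sub_div_atTop_prod_top hb hc hσ)).trans hpow)
  · filter_upwards [hb.eventually_gt_atTop 0] with p hp i
    exact Real.rpow_nonneg (div_nonneg (hσ0 i) hp.le) α
  · refine hL.congr' ?_
    filter_upwards [hb.eventually_gt_atTop 0] with p hp
    exact (sum_range_div_rpow hσ0 hα hp.le p).symm

theorem tendsto_prod_range_one_sub_tail (hT0 : ∀ y, 0 ≤ T y)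
    (htail : Tendsto (fun y => y ^ α * T y) atTop (𝓝 1)) (hα : 0 < α)
    (hσ : ∀ i, σ i ∈ Set.Ioc 0 C) (hc : ∀ i, |c i| ≤ M) (hb : Tendsto b atTop atTop)
    (hL : Tendsto (fun p => (normConst σ α p / b p) ^ α) atTop (𝓝 L)) :
    Tendsto (fun p => ∏ i ∈ range p, (1 - T ((b p - c i) / σ i))) atTop
      (𝓝 (Real.exp (-L))) := by
  have hT : Tendsto T atTop (𝓝 0) :=
    (isEquivalent_rpow_neg_of_tendsto htail).symm.tendsto_nhds (tendsto_rpow_neg_atTop hα)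
  exact tendsto_prod_range_one_sub (fun _ _ => hT0 _)
    (hT.comp (tendsto_sub_div_atTop_prod_top hb hc hσ))
    (tendsto_sum_range_tail htail hα.ne' hσ hc hb hL)

end Tail

section Probability

variable {Ω : Type*} [MeasurableSpace Ω] {P : Measure Ω}

theorem Measurable.measure_setOf_le {E : Type*} [MeasurableSpace E] (X : Ω → ℝ) {g : E → ℝ}
    (hg : Measurable g) : Measurable fun z => P {ω | X ω ≤ g z} := by
  have hmono : Monotone fun y => P {ω | X ω ≤ y} :=
    fun _ _ h => measure_mono fun _ hω => le_trans hω h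
  exact hmono.measurable.comp hg

theorem measure_forall_le_eq_lintegral_prod [IsProbabilityMeasure P] {E ι : Type*}
    [MeasurableSpace E] {Z : Ω → E} {ε : ι → Ω → ℝ} (hZ : Measurable Z)
    (hε : ∀ k, Measurable (ε k)) (hZε : IndepFun Z (fun ω k => ε k ω) P)
    (hεi : iIndepFun ε P) (K : Finset ι) {τ : ι → E → ℝ} (hτ : ∀ k, Measurable (τ k)) :
    P {ω | ∀ k ∈ K, ε k ω ≤ τ k (Z ω)} = ∫⁻ ω, ∏ k ∈ K, P {ω' | ε k ω' ≤ τ k (Z ω)} ∂P := by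
  set V : Ω → ι → ℝ := fun ω k => ε k ω
  have hV : Measurable V := measurable_pi_lambda _ hε
  set A : Set (E × (ι → ℝ)) := {q | ∀ k ∈ K, q.2 k ≤ τ k q.1}
  have hA : MeasurableSet A := by
    simp only [A, Set.ofPred_forall]
    exact MeasurableSet.biInter K.countable_toSet fun k _ =>
      measurableSet_le ((measurable_pi_apply k).comp measurable_snd) ((hτ k).comp measurable_fst)
  have hslice : ∀ z, P.map V (Prod.mk z ⁻¹' A) = ∏ k ∈ K, P {ω | ε k ω ≤ τ k z} := by
    intro z
    rw [Measure.map_apply hV (measurable_prodMk_left hA)]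
    have hpre : V ⁻¹' (Prod.mk z ⁻¹' A) = ⋂ k ∈ K, ε k ⁻¹' Set.Iic (τ k z) := by
      ext ω; simp [A, V]
    rw [hpre, hεi.measure_inter_preimage_eq_mul K fun k _ => measurableSet_Iic]
    rfl
  calc P {ω | ∀ k ∈ K, ε k ω ≤ τ k (Z ω)} = P ((fun ω => (Z ω, V ω)) ⁻¹' A) := rfl
    _ = (P.map Z).prod (P.map V) A := by
        rw [← (indepFun_iff_map_prod_eq_prod_map_map hZ.aemeasurable hV.aemeasurable).mp hZε,
          Measure.map_apply (hZ.prodMk hV) hA]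
    _ = ∫⁻ z, P.map V (Prod.mk z ⁻¹' A) ∂P.map Z := Measure.prod_apply hA
    _ = ∫⁻ ω, ∏ k ∈ K, P {ω' | ε k ω' ≤ τ k (Z ω)} ∂P := by
        simp_rw [hslice]
        exact lintegral_map (Finset.measurable_prod _ fun k _ => (hτ k).measure_setOf_le _) hZ

theorem measure_le_eq_ofReal_one_sub [IsProbabilityMeasure P] {X Y : Ω → ℝ} (hY : Measurable Y)
    (hXY : IdentDistrib X Y P P) (y : ℝ) :
    P {ω | X ω ≤ y} = ENNReal.ofReal (1 - (P {ω | y < Y ω}).toReal) := by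
  have hcompl : {ω | y < Y ω} = (Y ⁻¹' Set.Iic y)ᶜ := by ext; simp
  rw [← measureReal_def, hcompl, probReal_compl_eq_one_sub (hY measurableSet_Iic), sub_sub_cancel,
    measureReal_def, ENNReal.ofReal_toReal (measure_ne_top _ _)]
  exact hXY.measure_mem_eq measurableSet_Iic

theorem tendsto_prod_range_measure_le [IsProbabilityMeasure P] {ε : ℕ → Ω → ℝ}
    (hε : Measurable (ε 0)) (hid : ∀ i, IdentDistrib (ε i) (ε 0) P P) {α : ℝ} (hα : 0 < α)
    (htail : Tendsto (fun y => y ^ α * (P {ω | y < ε 0 ω}).toReal) atTop (𝓝 1))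
    {σ b c : ℕ → ℝ} {C M L : ℝ} (hσ : ∀ i, σ i ∈ Set.Ioc 0 C) (hc : ∀ i, |c i| ≤ M)
    (hb : Tendsto b atTop atTop)
    (hL : Tendsto (fun p => (normConst σ α p / b p) ^ α) atTop (𝓝 L)) :
    Tendsto (fun p => ∏ i ∈ range p, P {ω | ε i ω ≤ (b p - c i) / σ i}) atTop
      (𝓝 (ENNReal.ofReal (Real.exp (-L)))) := by
  refine (ENNReal.tendsto_ofReal (tendsto_prod_range_one_sub_tail
    (fun _ => ENNReal.toReal_nonneg) htail hα hσ hc hb hL)).congr fun p => ?_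
  rw [ENNReal.ofReal_prod_of_nonneg fun i _ =>
    (sub_nonneg.mpr measureReal_le_one : (0 : ℝ) ≤ 1 - (P _).toReal)]
  exact prod_congr rfl fun i _ => (measure_le_eq_ofReal_one_sub hε (hid i) _).symm

end Probability

-- The `NeZero` assumptions matter: an empty supremum is `0` in `ℝ`.
theorem Qmax_le_iff {Ω : Type*} {X₁ X₂ : ℕ → Ω → ℝ} {p₁ p₂ : ℕ} [NeZero p₁] [NeZero p₂]
    {ω : Ω} {r : ℝ} :
    Qmax X₁ X₂ p₁ p₂ ω ≤ r ↔ (∀ i : Fin p₁, X₁ i ω ≤ r) ∧ ∀ j : Fin p₂, X₂ j ω ≤ r := by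
  simp only [Qmax, max_le_iff, ciSup_le_iff (Set.finite_range _).bddAbove]

section FactorModel

variable {Ω : Type*} [MeasurableSpace Ω] {P : Measure Ω} {d : ℕ} {Z : Ω → Fin d → ℝ}
  {f : ℕ → (Fin d → ℝ) → ℝ} {σ : ℕ → ℝ} {ε₁ ε₂ X₁ X₂ : ℕ → Ω → ℝ}

theorem iIndepFun_sumElim_of_mixFun
    (h : iIndepFun (m := fun i => mixCodomMeasurableSpace d i) (mixFun Z ε₁ ε₂) P) :
    iIndepFun (fun k => Sum.elim ε₁ ε₂ k) P := by
  rw [iIndepFun_iff_iIndep]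
  convert (h.precomp Sum.inr_injective).iIndep using 1
  funext k
  rcases k with i | i <;> rfl

theorem indepFun_of_mixFun (hZ : Measurable Z) (hε₁ : ∀ i, Measurable (ε₁ i))
    (hε₂ : ∀ i, Measurable (ε₂ i))
    (h : iIndepFun (m := fun i => mixCodomMeasurableSpace d i) (mixFun Z ε₁ ε₂) P) :
    IndepFun Z (fun ω k => Sum.elim ε₁ ε₂ k ω) P := by
  have hm : ∀ i, Measurable (mixFun Z ε₁ ε₂ i) := by
    rintro (_ | i | i)
    exacts [hZ, hε₁ i, hε₂ i]
  have hsplit := indep_iSup_of_disjoint (fun i => (hm i).comap_le) h.iIndep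
    (S := {Sum.inl ()}) (T := Set.range Sum.inr) (by simp [Set.disjoint_singleton_left])
  rw [IndepFun_iff_Indep]
  refine indep_of_indep_of_le_right (indep_of_indep_of_le_left hsplit ?_) ?_
  · exact le_iSup₂ (f := fun i (_ : i ∈ ({Sum.inl ()} : Set (Unit ⊕ ℕ ⊕ ℕ))) =>
      (mixCodomMeasurableSpace d i).comap (mixFun Z ε₁ ε₂ i)) (Sum.inl ()) rfl
  · rw [MeasurableSpace.pi, MeasurableSpace.comap_iSup]
    refine iSup_le fun k => ?_
    rw [MeasurableSpace.comap_comp]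
    refine le_trans ?_ (le_iSup₂ (f := fun i (_ : i ∈ Set.range (Sum.inr : ℕ ⊕ ℕ → _)) =>
      (mixCodomMeasurableSpace d i).comap (mixFun Z ε₁ ε₂ i)) (Sum.inr k) ⟨k, rfl⟩)
    rcases k with i | i <;> exact le_rfl

theorem measure_Qmax_le_eq_lintegral [IsProbabilityMeasure P] (hZm : Measurable Z)
    (hfm : ∀ i, Measurable (f i)) (hσ : ∀ i, 0 < σ i) (hε₁m : ∀ i, Measurable (ε₁ i))
    (hε₂m : ∀ i, Measurable (ε₂ i))
    (hindep : iIndepFun (m := fun i => mixCodomMeasurableSpace d i) (mixFun Z ε₁ ε₂) P)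
    (hX₁ : ∀ i ω, X₁ i ω = f i (Z ω) + σ i * ε₁ i ω)
    (hX₂ : ∀ i ω, X₂ i ω = f i (Z ω) + σ i * ε₂ i ω) {p : ℕ} [NeZero p] (r : ℝ) :
    P {ω | Qmax X₁ X₂ p p ω ≤ r} =
      ∫⁻ ω, (∏ i ∈ range p, P {ω' | ε₁ i ω' ≤ (r - f i (Z ω)) / σ i}) *
        ∏ i ∈ range p, P {ω' | ε₂ i ω' ≤ (r - f i (Z ω)) / σ i} ∂P := by
  have hτ : ∀ k : ℕ ⊕ ℕ, Measurable fun z => (r - f (k.elim id id) z) / σ (k.elim id id) :=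
    fun k => (measurable_const.sub (hfm _)).div_const _
  have key := measure_forall_le_eq_lintegral_prod hZm (Sum.forall.mpr ⟨hε₁m, hε₂m⟩)
    (indepFun_of_mixFun hZm hε₁m hε₂m hindep) (iIndepFun_sumElim_of_mixFun hindep)
    ((range p).disjSum (range p)) hτ
  simp only [prod_disjSum, Sum.elim_inl, Sum.elim_inr, id] at key
  rw [← key]
  congr 1
  ext ω
  simp only [Set.mem_ofPred_eq, Qmax_le_iff, inl_mem_disjSum, inr_mem_disjSum, Sum.forall,
    Sum.elim_inl, Sum.elim_inr, id, mem_range, Fin.forall_iff, le_div_iff₀ (hσ _), hX₁, hX₂]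
  constructor <;> rintro ⟨h₁, h₂⟩ <;>
    exact ⟨fun i hi => by linarith [h₁ i hi], fun i hi => by linarith [h₂ i hi]⟩

theorem tendsto_measure_Qmax_le [IsProbabilityMeasure P] (hZm : Measurable Z)
    (hfm : ∀ i, Measurable (f i)) (hfbdd : ∀ᵐ ω ∂P, ∃ M : ℝ, ∀ i, |f i (Z ω)| ≤ M) {C : ℝ}
    (hσ : ∀ i, σ i ∈ Set.Ioc 0 C) {α₁ α₂ : ℝ} (hα₁ : 0 < α₁) (hα₂ : 0 < α₂)
    (hε₁m : ∀ i, Measurable (ε₁ i)) (hε₂m : ∀ i, Measurable (ε₂ i))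
    (hid₁ : ∀ i, IdentDistrib (ε₁ i) (ε₁ 0) P P) (hid₂ : ∀ i, IdentDistrib (ε₂ i) (ε₂ 0) P P)
    (hindep : iIndepFun (m := fun i => mixCodomMeasurableSpace d i) (mixFun Z ε₁ ε₂) P)
    (htail₁ : Tendsto (fun x : ℝ => x ^ α₁ * (P {ω | x < ε₁ 0 ω}).toReal) atTop (𝓝 1))
    (htail₂ : Tendsto (fun x : ℝ => x ^ α₂ * (P {ω | x < ε₂ 0 ω}).toReal) atTop (𝓝 1))
    (hX₁ : ∀ i ω, X₁ i ω = f i (Z ω) + σ i * ε₁ i ω)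
    (hX₂ : ∀ i ω, X₂ i ω = f i (Z ω) + σ i * ε₂ i ω) {b : ℕ → ℝ} (hb : Tendsto b atTop atTop)
    {L₁ L₂ : ℝ} (hL₁ : Tendsto (fun p => (normConst σ α₁ p / b p) ^ α₁) atTop (𝓝 L₁))
    (hL₂ : Tendsto (fun p => (normConst σ α₂ p / b p) ^ α₂) atTop (𝓝 L₂)) :
    Tendsto (fun p => P {ω | Qmax X₁ X₂ p p ω ≤ b p}) atTop
      (𝓝 (ENNReal.ofReal (Real.exp (-L₁) * Real.exp (-L₂)))) := by
  set G : ℕ → Ω → ℝ≥0∞ := fun p ω =>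
    (∏ i ∈ range p, P {ω' | ε₁ i ω' ≤ (b p - f i (Z ω)) / σ i}) *
      ∏ i ∈ range p, P {ω' | ε₂ i ω' ≤ (b p - f i (Z ω)) / σ i}
  have hGm : ∀ p, Measurable (G p) := fun p => by
    have hu : ∀ i, Measurable fun ω => (b p - f i (Z ω)) / σ i :=
      fun i => (measurable_const.sub ((hfm i).comp hZm)).div_const _
    exact (Finset.measurable_prod _ fun i _ => (hu i).measure_setOf_le _).mul
      (Finset.measurable_prod _ fun i _ => (hu i).measure_setOf_le _)
  have hG1 : ∀ p ω, G p ω ≤ 1 := fun p ω =>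
    mul_le_one' (prod_le_one' fun _ _ => prob_le_one) (prod_le_one' fun _ _ => prob_le_one)
  have hGlim : ∀ᵐ ω ∂P, Tendsto (fun p => G p ω) atTop
      (𝓝 (ENNReal.ofReal (Real.exp (-L₁) * Real.exp (-L₂)))) := by
    filter_upwards [hfbdd] with ω ⟨M, hM⟩
    rw [ENNReal.ofReal_mul (Real.exp_pos _).le]
    exact ENNReal.Tendsto.mul
      (tendsto_prod_range_measure_le (hε₁m 0) hid₁ hα₁ htail₁ hσ hM hb hL₁)
      (Or.inr ENNReal.ofReal_ne_top)
      (tendsto_prod_range_measure_le (hε₂m 0) hid₂ hα₂ htail₂ hσ hM hb hL₂)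
      (Or.inr ENNReal.ofReal_ne_top)
  have hDCT := tendsto_lintegral_of_dominated_convergence (fun _ => 1) hGm
    (fun p => ae_of_all _ (hG1 p)) (by simp) hGlim
  rw [lintegral_const, measure_univ, mul_one] at hDCT
  refine hDCT.congr' ?_
  filter_upwards [eventually_ne_atTop 0] with p hp
  have : NeZero p := ⟨hp⟩
  exact (measure_Qmax_le_eq_lintegral hZm hfm (fun i => (hσ i).1) hε₁m hε₂m hindep hX₁ hX₂
    (b p)).symm

end FactorModel

theorem coro1_case3_general
    {Ω : Type*} [MeasurableSpace Ω] (P : Measure Ω) [IsProbabilityMeasure P]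
    (d : ℕ) (Z : Ω → Fin d → ℝ) (hZm : Measurable Z)
    (f : ℕ → (Fin d → ℝ) → ℝ) (hfm : ∀ i, Measurable (f i))
    (hfbdd : ∀ᵐ ω ∂P, ∃ M : ℝ, ∀ i, |f i (Z ω)| ≤ M)
    (C₁ C₂ : ℝ) (hC₁ : 0 < C₁)
    (σ : ℕ → ℝ) (hσ : ∀ i, σ i ∈ Set.Icc C₁ C₂)
    (α₁ α₂ : ℝ) (hα₂ : 0 < α₂)
    (ε₁ ε₂ : ℕ → Ω → ℝ) (hε₁m : ∀ i, Measurable (ε₁ i)) (hε₂m : ∀ i, Measurable (ε₂ i))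
    (hid₁ : ∀ i, IdentDistrib (ε₁ i) (ε₁ 0) P P)
    (hid₂ : ∀ i, IdentDistrib (ε₂ i) (ε₂ 0) P P)
    (hindep : iIndepFun (m := fun i => mixCodomMeasurableSpace d i) (mixFun Z ε₁ ε₂) P)
    (htail₁ : Tendsto (fun x : ℝ => x ^ α₁ * (P {ω | x < ε₁ 0 ω}).toReal) atTop (nhds 1))
    (htail₂ : Tendsto (fun x : ℝ => x ^ α₂ * (P {ω | x < ε₂ 0 ω}).toReal) atTop (nhds 1))
    (X₁ X₂ : ℕ → Ω → ℝ)
    (hX₁ : ∀ i ω, X₁ i ω = f i (Z ω) + σ i * ε₁ i ω)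
    (hX₂ : ∀ i ω, X₂ i ω = f i (Z ω) + σ i * ε₂ i ω)
    (hα : α₂ < α₁) :
    Tendsto (fun p : ℕ => normConst σ α₁ p / normConst σ α₂ p) atTop (nhds 0) ∧
    ∀ x : ℝ, 0 < x →
      Tendsto (fun p : ℕ => (P {ω | Qmax X₁ X₂ p p ω ≤ normConst σ α₂ p * x}).toReal) atTop (nhds (frechetCDF α₂ x)) := by
  have hratio := tendsto_normConst_div_normConst hC₁ hσ hα₂ hα
  refine ⟨hratio, fun x hx => ?_⟩
  have ha₂ : Tendsto (normConst σ α₂) atTop atTop :=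
    tendsto_normConst_atTop hC₁ (fun i => (hσ i).1) hα₂
  have hL₁ : Tendsto (fun p => (normConst σ α₁ p / (normConst σ α₂ p * x)) ^ α₁) atTop (𝓝 0) := by
    simpa [div_mul_eq_div_div, Real.zero_rpow (hα₂.trans hα).ne'] using
      (hratio.div_const x).rpow_const (Or.inr (hα₂.trans hα).le)
  have hL₂ : Tendsto (fun p => (normConst σ α₂ p / (normConst σ α₂ p * x)) ^ α₂) atTop
      (𝓝 (x ^ (-α₂))) := by
    refine tendsto_const_nhds.congr' ?_
    filter_upwards [ha₂.eventually_gt_atTop 0] with p hp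
    rw [div_mul_cancel_left₀ hp.ne', Real.inv_rpow hx.le, Real.rpow_neg hx.le]
  have hQ := tendsto_measure_Qmax_le hZm hfm hfbdd
    (fun i => ⟨hC₁.trans_le (hσ i).1, (hσ i).2⟩) (hα₂.trans hα) hα₂ hε₁m hε₂m hid₁ hid₂ hindep
    htail₁ htail₂ hX₁ hX₂ (ha₂.atTop_mul_const hx) hL₁ hL₂
  rw [frechetCDF, if_pos hx]
  simpa [Function.comp_def, (Real.exp_pos _).le] using
    (ENNReal.tendsto_toReal ENNReal.ofReal_ne_top).comp hQ

/-- Corollary 1, third case: if `α₁ > α₂` then `a_{1,p}/a_{2,p} → 0` and `P(Q_p ≤ a_{2,p} x) → Ψ_{α₂}(x)` for every `x > 0`. -/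
theorem coro1_case3
    {Ω : Type*} [MeasurableSpace Ω] (P : Measure Ω) [IsProbabilityMeasure P]
    (d : ℕ) (Z : Ω → Fin d → ℝ) (hZm : Measurable Z)
    (f : ℕ → (Fin d → ℝ) → ℝ) (hfm : ∀ i, Measurable (f i))
    (hfbdd : ∀ᵐ ω ∂P, ∃ M : ℝ, ∀ i, |f i (Z ω)| ≤ M)
    (C₁ C₂ : ℝ) (hC₁ : 0 < C₁) (hC₁₂ : C₁ ≤ C₂)
    (σ : ℕ → ℝ) (hσ : ∀ i, σ i ∈ Set.Icc C₁ C₂)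
    (α₁ α₂ : ℝ) (hα₁ : 0 < α₁) (hα₂ : 0 < α₂)
    (ε₁ ε₂ : ℕ → Ω → ℝ) (hε₁m : ∀ i, Measurable (ε₁ i)) (hε₂m : ∀ i, Measurable (ε₂ i))
    (hid₁ : ∀ i, IdentDistrib (ε₁ i) (ε₁ 0) P P)
    (hid₂ : ∀ i, IdentDistrib (ε₂ i) (ε₂ 0) P P)
    (hindep : iIndepFun (m := fun i => mixCodomMeasurableSpace d i) (mixFun Z ε₁ ε₂) P)
    (htail₁ : Tendsto (fun x : ℝ => x ^ α₁ * (P {ω | x < ε₁ 0 ω}).toReal) atTop (nhds 1))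
    (htail₂ : Tendsto (fun x : ℝ => x ^ α₂ * (P {ω | x < ε₂ 0 ω}).toReal) atTop (nhds 1))
    (X₁ X₂ : ℕ → Ω → ℝ)
    (hX₁ : ∀ i ω, X₁ i ω = f i (Z ω) + σ i * ε₁ i ω)
    (hX₂ : ∀ i ω, X₂ i ω = f i (Z ω) + σ i * ε₂ i ω)
    (hα : α₂ < α₁) :
    Tendsto (fun p : ℕ => normConst σ α₁ p / normConst σ α₂ p) atTop (nhds 0) ∧
    ∀ x : ℝ, 0 < x →
      Tendsto (fun p : ℕ => (P {ω | Qmax X₁ X₂ p p ω ≤ normConst σ α₂ p * x}).toReal) atTop (nhds (frechetCDF α₂ x)) :=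
  coro1_case3_general P d Z hZm f hfm hfbdd C₁ C₂ hC₁ σ hσ α₁ α₂ hα₂ ε₁ ε₂ hε₁m hε₂m hid₁ hid₂
    hindep htail₁ htail₂ X₁ X₂ hX₁ hX₂ hα
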